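/- Let t ≥ 3, k ≥ 3, and l ≥ t + 1, and let n be a positive integer. Suppose φ is a coloring of the edges of the complete graph on vertex set {1, …, n} with two colors, 'first' and 'second', containing no monochromatic K_k in color 'first' and no monochromatic K_{l − t + 1} in color 'second'. Let χ be the 3-coloring of the edges of the complete graph on {1, …, t + 1} × {1, …, n} defined as follows. For block indices i > j, call the block pair (i, j) type B if (i, j) = (2, 1) or (i ≥ 4 and 3 ≤ j ≤ i − 1), and type C if i ≥ 3 and j ∈ {1, 2}. Set: (a) χ((i, v), (i, w)) = 2 if φ(v, w) = 'first' and 3 if φ(v, w) = 'second'; (b) for i ≠ j with type B block pair: χ((i, v), (j, w)) = 3 if v = w, else 2 if φ(v, w) = 'first' and 1 if φ(v, w) = 'second'; (c) for i ≠ j with type C block pair: χ((i, v), (j, w)) = 1 if v = w, else 2 if φ(v, w) = 'first' and 3 if φ(v, w) = 'second'. Then χ contains no monochromatic K_k of color 2. -/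
import Mathlib


/-- The two colors of the base coloring `φ`. -/
inductive TwoColor
  | first
  | second
deriving DecidableEq

/-- A coloring `χ` of the edges of the complete graph on `V` contains a
monochromatic `K_m` of color `c`: there are `m` vertices all of whose
pairwise edges receive color `c`. -/
def HasMonoClique {V C : Type*} (χ : V → V → C) (c : C) (m : ℕ) : Prop :=
  ∃ s : Finset V, s.card = m ∧ ∀ u ∈ s, ∀ v ∈ s, u ≠ v → χ u v = c

/-- Block pair `(i, j)` (with 1-based block indices, `i > j`) is of type `B`:
`(i, j) = (2, 1)`, or `i ≥ 4` and `3 ≤ j ≤ i - 1`. -/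
def BlockTypeB (i j : ℕ) : Prop :=
  (i = 2 ∧ j = 1) ∨ (4 ≤ i ∧ 3 ≤ j ∧ j ≤ i - 1)

instance (i j : ℕ) : Decidable (BlockTypeB i j) := by
  unfold BlockTypeB; infer_instance

/-- The 3-coloring `χ` of the edges of the complete graph on
`{1, …, t+1} × {1, …, n}` built from a two-coloring `φ` of the edges of `K_n`.
Vertices are pairs `(i, v)` with block index `i` (represented 0-based, so the
1-based block index is `i + 1`).  Within a block the colors `first`/`second` of
`φ` become `2`/`3`; between two distinct blocks whose (ordered) 1-based pair is
of type `B`, diagonal edges (`v = w`) get color `3` and otherwise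
`first`/`second` become `2`/`1`; between blocks of type `C` (all remaining
pairs, i.e. `i ≥ 3` and `j ∈ {1, 2}`), diagonal edges get color `1` and
otherwise `first`/`second` become `2`/`3`. -/
def chi (t n : ℕ) (φ : Fin n → Fin n → TwoColor) :
    Fin (t + 1) × Fin n → Fin (t + 1) × Fin n → ℕ := fun p q =>
  if p.1 = q.1 then
    if φ p.2 q.2 = TwoColor.first then 2 else 3
  else
    if BlockTypeB (max (p.1.1 + 1) (q.1.1 + 1)) (min (p.1.1 + 1) (q.1.1 + 1)) then
      if p.2 = q.2 then 3
      else if φ p.2 q.2 = TwoColor.first then 2 else 1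
    else
      if p.2 = q.2 then 1
      else if φ p.2 q.2 = TwoColor.first then 2 else 3

/-- The coloring `chi t n φ` contains no monochromatic `K_k` of color `2`. -/
theorem chi_no_mono_color_two (t k l n : ℕ) (ht : 3 ≤ t) (hk : 3 ≤ k) (hl : t + 1 ≤ l) (hn : 0 < n)
    (φ : Fin n → Fin n → TwoColor)
    (hφsymm : ∀ v w, φ v w = φ w v)
    (hφ1 : ¬ HasMonoClique φ TwoColor.first k)
    (hφ2 : ¬ HasMonoClique φ TwoColor.second (l - t + 1)) :
    ¬ HasMonoClique (chi t n φ) 2 k := by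
  rintro ⟨s, hcard, hmono⟩
  apply hφ1
  refine ⟨s.image Prod.snd, ?_, ?_⟩
  · rw [Finset.card_image_of_injOn, hcard]
    intro p hp q hq hpq
    by_contra hne
    have h := hmono p hp q hq hne
    have h1 : p.1 ≠ q.1 := fun h' => hne (Prod.ext h' hpq)
    simp only [chi, if_neg h1] at h
    split at h <;> simp [hpq] at h
  · intro u hu v hv huv
    simp only [Finset.mem_image] at hu hv
    obtain ⟨p, hp, rfl⟩ := hu
    obtain ⟨q, hq, rfl⟩ := hv
    have hne : p ≠ q := fun h => huv (congrArg Prod.snd h)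
    have h := hmono p hp q hq hne
    simp only [chi] at h
    split at h
    · split at h
      · assumption
      · exact absurd h (by norm_num)
    · split at h <;>
        · split at h
          · assumption
          · exact absurd h (by norm_num)
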